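/- arXiv:2007.14508 — 3 statements merged into one kernel-verified Lean document; each statement's English description precedes it below -/
import Mathlib

section
/- Let H be a finite simple graph, let γ_1,…,γ_m be positive reals summing to 1, let W_0 ∈ B^γ, and let η > 0. Set t_max = sup{t(H,g) : g ∈ W_Ω}. Then there exists c ∈ (0,1], depending only on γ, H and η, such that for every g ∈ W_Ω, t(H, g^{+η}) ≥ t(H,g) + c·(t_max − t(H,g))^2. -/
open MeasureTheory Set Filter
open scoped ENNReal NNReal

noncomputable section

namespace GraphonLDP

/-- The unit square `[0,1]² ⊆ ℝ²`. -/
def unitSq : Set (ℝ × ℝ) := Set.Icc (0:ℝ) 1 ×ˢ Set.Icc (0:ℝ) 1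

/-- A graphon: a measurable, symmetric function with values in `[0,1]`. -/
def IsGraphon (f : ℝ → ℝ → ℝ) : Prop :=
  Measurable (Function.uncurry f) ∧ (∀ x y, f x y ∈ Set.Icc (0:ℝ) 1) ∧ ∀ x y, f x y = f y x

open Classical in
/-- The pointwise relative entropy `h_p(u)`, valued in `[0,∞]`
(with `h_0(0) = h_1(1) = 0`, `h_0(u) = ∞` for `u ≠ 0`, `h_1(u) = ∞` for `u ≠ 1`,
and the convention `0 log 0 = 0`, which is automatic since `Real.log 0 = 0`). -/
def relEnt (p u : ℝ) : ℝ≥0∞ :=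
  if p = 0 then (if u = 0 then 0 else ⊤)
  else if p = 1 then (if u = 1 then 0 else ⊤)
  else ENNReal.ofReal (u * Real.log (u / p) + (1 - u) * Real.log ((1 - u) / (1 - p)))

/-- The relative entropy functional `I_{W₀}(f)`, valued in `[0,∞]`. -/
def Ient (W₀ f : ℝ → ℝ → ℝ) : ℝ≥0∞ :=
  (1 / 2) * ∫⁻ q in unitSq, relEnt (W₀ q.1 q.2) (f q.1 q.2)

/-- `Ω = {(x,y) ∈ [0,1]² : 0 < W₀(x,y) < 1}`. -/
def OmegaSet (W₀ : ℝ → ℝ → ℝ) : Set (ℝ × ℝ) :=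
  {q | q ∈ unitSq ∧ W₀ q.1 q.2 ∈ Set.Ioo (0:ℝ) 1}

/-- `f ∈ W_Ω`: `f` is a graphon agreeing with `W₀` a.e. on `[0,1]² \ Ω`. -/
def MemWOmega (W₀ f : ℝ → ℝ → ℝ) : Prop :=
  IsGraphon f ∧
    ∀ᵐ q ∂(volume.restrict (unitSq \ OmegaSet W₀)), f q.1 q.2 = W₀ q.1 q.2

/-- The cut distance `d_□(f,g)`. -/
def cutDist (f g : ℝ → ℝ → ℝ) : ℝ :=
  ⨆ p : {S : Set ℝ // MeasurableSet S ∧ S ⊆ Set.Icc (0:ℝ) 1} ×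
        {T : Set ℝ // MeasurableSet T ∧ T ⊆ Set.Icc (0:ℝ) 1},
    |∫ q in ((p.1 : Set ℝ) ×ˢ (p.2 : Set ℝ)), (f q.1 q.2 - g q.1 q.2)|

/-- The set of values of `W₀` on the unit square. -/
def imageVals (W₀ : ℝ → ℝ → ℝ) : Set ℝ := {w : ℝ | ∃ q ∈ unitSq, W₀ q.1 q.2 = w}

/-- Real-valued relative entropy `h_p(u)` for `p ∈ (0,1)`. -/
def hRel (p u : ℝ) : ℝ :=
  u * Real.log (u / p) + (1 - u) * Real.log ((1 - u) / (1 - p))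

/-- `ψ_p(x) = h_p(x^{1/d})`. -/
def psi (d : ℕ) (p : ℝ) : ℝ → ℝ := fun x => hRel p (x ^ ((d : ℝ)⁻¹))

/-- The convex minorant on `[0,1]`: pointwise supremum of affine minorants. -/
def convexMinorant (F : ℝ → ℝ) (x : ℝ) : ℝ :=
  sSup {y : ℝ | ∃ a b : ℝ, (∀ z ∈ Set.Icc (0:ℝ) 1, a * z + b ≤ F z) ∧ y = a * x + b}

/-- `A⁺_ε(f,c) = {(x,y) ∈ [0,1]² : f(x,y) − c ≥ ε}`. -/
def Aplus (f : ℝ → ℝ → ℝ) (c ε : ℝ) : Set (ℝ × ℝ) :=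
  {q | q ∈ unitSq ∧ ε ≤ f q.1 q.2 - c}

/-- `A⁻_ε(f,c) = {(x,y) ∈ [0,1]² : c − f(x,y) ≥ ε}`. -/
def Aminus (f : ℝ → ℝ → ℝ) (c ε : ℝ) : Set (ℝ × ℝ) :=
  {q | q ∈ unitSq ∧ ε ≤ c - f q.1 q.2}

/-- Partial sums `γ_1 + ⋯ + γ_n`. -/
def cumSum {m : ℕ} (γ : Fin m → ℝ) (n : ℕ) : ℝ :=
  ∑ i : Fin m, if (i : ℕ) < n then γ i else 0

/-- The interval `I_j` of the block structure: `I_1 = [0,γ_1]`,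
`I_j = (γ_1+⋯+γ_{j-1}, γ_1+⋯+γ_j]` for `j ≥ 2`. -/
def blockI {m : ℕ} (γ : Fin m → ℝ) (j : Fin m) : Set ℝ :=
  if (j : ℕ) = 0 then Set.Icc 0 (cumSum γ 1)
  else Set.Ioc (cumSum γ (j : ℕ)) (cumSum γ ((j : ℕ) + 1))

/-- `γ` is a vector of positive block widths summing to `1`. -/
def GoodWidths {m : ℕ} (γ : Fin m → ℝ) : Prop :=
  (∀ i, 0 < γ i) ∧ ∑ i, γ i = 1

/-- `f` is the block graphon in `B^γ` with matrix `P`. -/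
def IsBlockGraphon {m : ℕ} (γ : Fin m → ℝ) (P : Fin m → Fin m → ℝ) (f : ℝ → ℝ → ℝ) : Prop :=
  (∀ i j, P i j ∈ Set.Icc (0:ℝ) 1) ∧ (∀ i j, P i j = P j i) ∧
    ∀ i j, ∀ x ∈ blockI γ i, ∀ y ∈ blockI γ j, f x y = P i j

/-- The homomorphism density `t(H,f)`. -/
def homDensity {v : ℕ} (H : SimpleGraph (Fin v)) [DecidableRel H.Adj] (f : ℝ → ℝ → ℝ) : ℝ :=
  ∫ x in Set.univ.pi (fun _ : Fin v => Set.Icc (0:ℝ) 1),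
    ∏ e ∈ Finset.univ.filter (fun e : Fin v × Fin v => e.1 < e.2 ∧ H.Adj e.1 e.2),
      f (x e.1) (x e.2)

/-- `‖g‖_d = (∫_{[0,1]²} g^d)^{1/d}`. -/
def normD (d : ℕ) (g : ℝ → ℝ → ℝ) : ℝ :=
  (∫ q in unitSq, (g q.1 q.2) ^ d) ^ ((d : ℝ)⁻¹)

/-- The rescaled restriction `f_{ij}` of `f` to the block `I_i × I_j`. -/
def fBlock {m : ℕ} (γ : Fin m → ℝ) (f : ℝ → ℝ → ℝ) (i j : Fin m) : ℝ → ℝ → ℝ :=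
  fun x y => f (cumSum γ (i : ℕ) + x * γ i) (cumSum γ (j : ℕ) + y * γ j)

/-- `K_{W₀}(f,a)`. -/
def Kfun (W₀ f a : ℝ → ℝ → ℝ) : ℝ :=
  ∫ q in unitSq,
    (a q.1 q.2 * f q.1 q.2 -
      Real.log (W₀ q.1 q.2 * Real.exp (a q.1 q.2) + 1 - W₀ q.1 q.2))

/-- Symmetric functions in `L²([0,1]²)`. -/
def SymL2 (a : ℝ → ℝ → ℝ) : Prop :=
  Measurable (Function.uncurry a) ∧
    (∀ᵐ q ∂(volume.restrict unitSq), a q.1 q.2 = a q.2 q.1) ∧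
    IntegrableOn (fun q : ℝ × ℝ => (a q.1 q.2) ^ 2) unitSq

/-- The matrix `P` with the entries `(a,b)` and `(b,a)` replaced by `q`. -/
def modMat {m : ℕ} (P : Fin m → Fin m → ℝ) (a b : Fin m) (q : ℝ) :
    Fin m → Fin m → ℝ :=
  fun i j => if (i = a ∧ j = b) ∨ (i = b ∧ j = a) then q else P i j

/-- The block `I_a × I_b` of the block graphon `W₀ = (P i j)` is relevant:
`P a b > 0` and replacing the entries `P a b = P b a` by any strictly smaller
(nonnegative) value strictly decreases the homomorphism density of `H`. -/
def RelevantBlock {v m : ℕ} (H : SimpleGraph (Fin v)) [DecidableRel H.Adj]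
    (γ : Fin m → ℝ) (P : Fin m → Fin m → ℝ) (W₀ : ℝ → ℝ → ℝ) (a b : Fin m) : Prop :=
  0 < P a b ∧ ∀ q : ℝ, 0 ≤ q → q < P a b →
    ∀ g : ℝ → ℝ → ℝ, IsGraphon g → IsBlockGraphon γ (modMat P a b q) g →
      homDensity H g < homDensity H W₀

open Classical in
/-- `g^{+η}`: equal to `min (g + η) 1` on `Ω` and to `g` off `Ω`. -/
def gplus (W₀ g : ℝ → ℝ → ℝ) (η : ℝ) : ℝ → ℝ → ℝ := fun x y =>
  if (x, y) ∈ OmegaSet W₀ then min (g x y + η) 1 else g x y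

open Classical in
/-- The graphon `f_{a,b,c}^γ`: `a` on `[0,γ]²`, `c` on `(γ,1]²`, `b` elsewhere. -/
def fabc (γ a b c : ℝ) : ℝ → ℝ → ℝ := fun x y =>
  if x ∈ Set.Icc (0:ℝ) γ ∧ y ∈ Set.Icc (0:ℝ) γ then a
  else if x ∈ Set.Ioc γ 1 ∧ y ∈ Set.Ioc γ 1 then c
  else b

/-- Membership in the two-block family `B^{(γ,1-γ)} = {f_{a,b,c}^γ : a,b,c ∈ [0,1]}`. -/
def memB2 (γ : ℝ) (f : ℝ → ℝ → ℝ) : Prop :=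
  ∃ a b c : ℝ, a ∈ Set.Icc (0:ℝ) 1 ∧ b ∈ Set.Icc (0:ℝ) 1 ∧ c ∈ Set.Icc (0:ℝ) 1 ∧
    f = fabc γ a b c

/-- The diagonal blocks `[0,γ]² ∪ (γ,1]²`. -/
def diagBlocks (γ : ℝ) : Set (ℝ × ℝ) :=
  (Set.Icc (0:ℝ) γ ×ˢ Set.Icc (0:ℝ) γ) ∪ (Set.Ioc γ 1 ×ˢ Set.Ioc γ 1)

/-- The operator norm `‖f‖_op = sup {‖T_f u‖₂ : ‖u‖₂ ≤ 1}` of the kernel operator `T_f`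
on `L²([0,1])`. -/
def opNorm (f : ℝ → ℝ → ℝ) : ℝ :=
  sSup {c : ℝ | ∃ u : ℝ → ℝ, Measurable u ∧
    eLpNorm u 2 (volume.restrict (Set.Icc (0:ℝ) 1)) ≤ 1 ∧
    c = (∫ x in Set.Icc (0:ℝ) 1, (∫ y in Set.Icc (0:ℝ) 1, f x y * u y) ^ 2) ^ ((2:ℝ)⁻¹)}

/-! ### Auxiliary machinery for `stmt13` -/

/-- The uniform probability measure on `[0,1]`. -/
abbrev mu0 : Measure ℝ := volume.restrict (Set.Icc (0:ℝ) 1)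

instance : IsProbabilityMeasure mu0 := by
  constructor
  rw [Measure.restrict_apply_univ, Real.volume_Icc]
  norm_num

/-- The product probability measure on the cube `[0,1]^v`. -/
def piCube (v : ℕ) : Measure (Fin v → ℝ) := Measure.pi fun _ => mu0

instance (v : ℕ) : IsProbabilityMeasure (piCube v) :=
  Measure.pi.instIsProbabilityMeasure _

lemma restrict_cube (v : ℕ) :
    (volume : Measure (Fin v → ℝ)).restrict (Set.univ.pi fun _ => Set.Icc (0:ℝ) 1) = piCube v := by
  show _ = Measure.pi fun _ : Fin v => mu0
  rw [volume_pi]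
  refine (Measure.pi_eq fun t ht => ?_).symm
  rw [Measure.restrict_apply (MeasurableSet.univ_pi ht), ← Set.pi_inter_distrib, Measure.pi_pi]
  exact Finset.prod_congr rfl fun i _ => (Measure.restrict_apply (ht i)).symm

lemma measurableSet_unitSq : MeasurableSet unitSq :=
  measurableSet_Icc.prod measurableSet_Icc

lemma measurePreserving_pair {v : ℕ} {i j : Fin v} (hij : i ≠ j) :
    MeasurePreserving (fun x : Fin v → ℝ => (x i, x j)) (piCube v)
      (volume.restrict unitSq) := by
  have hT : Measurable (fun x : Fin v → ℝ => (x i, x j)) :=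
    (measurable_pi_apply i).prodMk (measurable_pi_apply j)
  refine ⟨hT, ?_⟩
  have h1 : (volume : Measure (ℝ × ℝ)).restrict unitSq = mu0.prod mu0 := by
    rw [Measure.volume_eq_prod, Measure.prod_restrict]
    rfl
  rw [h1]
  refine (Measure.prod_eq fun s t hs ht => ?_).symm
  rw [Measure.map_apply hT (hs.prod ht)]
  have hset : (fun x : Fin v → ℝ => (x i, x j)) ⁻¹' (s ×ˢ t)
      = Set.univ.pi (fun k => if k = i then s else if k = j then t else Set.univ) := by
    ext x
    simp only [Set.mem_preimage, Set.mem_prod, Set.mem_pi, Set.mem_univ, forall_true_left]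
    constructor
    · rintro ⟨h1, h2⟩ k
      by_cases hki : k = i
      · subst hki; simpa using h1
      · by_cases hkj : k = j
        · subst hkj; simp [hki, h2]
        · simp [hki, hkj]
    · intro h
      refine ⟨?_, ?_⟩
      · have := h i; simpa using this
      · have := h j; simpa [hij.symm] using this
  rw [hset]
  unfold piCube
  rw [Measure.pi_pi]
  classical
  rw [← Finset.mul_prod_erase Finset.univ _ (Finset.mem_univ i)]
  rw [← Finset.mul_prod_erase _ _ (Finset.mem_erase.mpr ⟨hij.symm, Finset.mem_univ j⟩)]
  rw [Finset.prod_eq_one (fun k hk => ?_)]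
  · simp [hij.symm]
  · simp only [Finset.mem_erase] at hk
    simp [hk.1, hk.2.1, measure_univ]

/-- The edge finset used in `homDensity`. -/
def edges {v : ℕ} (H : SimpleGraph (Fin v)) [DecidableRel H.Adj] : Finset (Fin v × Fin v) :=
  Finset.univ.filter (fun e : Fin v × Fin v => e.1 < e.2 ∧ H.Adj e.1 e.2)

lemma homDensity_eq {v : ℕ} (H : SimpleGraph (Fin v)) [DecidableRel H.Adj] (f : ℝ → ℝ → ℝ) :
    homDensity H f = ∫ x, ∏ e ∈ edges H, f (x e.1) (x e.2) ∂(piCube v) := by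
  unfold homDensity edges
  rw [← restrict_cube]

lemma measurable_prodEdge {v : ℕ} (H : SimpleGraph (Fin v)) [DecidableRel H.Adj]
    {f : ℝ → ℝ → ℝ} (hf : Measurable (Function.uncurry f)) :
    Measurable fun x : Fin v → ℝ => ∏ e ∈ edges H, f (x e.1) (x e.2) := by
  refine Finset.measurable_prod _ fun e _ => ?_
  have h : Measurable fun x : Fin v → ℝ => (x e.1, x e.2) :=
    (measurable_pi_apply _).prodMk (measurable_pi_apply _)
  exact hf.comp h

lemma integrable_prodEdge {v : ℕ} (H : SimpleGraph (Fin v)) [DecidableRel H.Adj]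
    {f : ℝ → ℝ → ℝ} (hf : Measurable (Function.uncurry f))
    (hbd : ∀ x y, f x y ∈ Set.Icc (0:ℝ) 1) :
    Integrable (fun x : Fin v → ℝ => ∏ e ∈ edges H, f (x e.1) (x e.2)) (piCube v) := by
  refine Integrable.mono' (integrable_const 1)
    (measurable_prodEdge H hf).aestronglyMeasurable (ae_of_all _ fun x => ?_)
  rw [Real.norm_eq_abs, abs_of_nonneg (Finset.prod_nonneg fun e _ => (hbd _ _).1)]
  exact Finset.prod_le_one (fun e _ => (hbd _ _).1) (fun e _ => (hbd _ _).2)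

lemma homDensity_nonneg {v : ℕ} (H : SimpleGraph (Fin v)) [DecidableRel H.Adj]
    {f : ℝ → ℝ → ℝ} (hbd : ∀ x y, f x y ∈ Set.Icc (0:ℝ) 1) :
    0 ≤ homDensity H f := by
  rw [homDensity_eq]
  exact integral_nonneg fun x => Finset.prod_nonneg fun e _ => (hbd _ _).1

lemma homDensity_le_one {v : ℕ} (H : SimpleGraph (Fin v)) [DecidableRel H.Adj]
    {f : ℝ → ℝ → ℝ} (hf : Measurable (Function.uncurry f))
    (hbd : ∀ x y, f x y ∈ Set.Icc (0:ℝ) 1) :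
    homDensity H f ≤ 1 := by
  rw [homDensity_eq]
  calc ∫ x, ∏ e ∈ edges H, f (x e.1) (x e.2) ∂(piCube v)
      ≤ ∫ _x, (1:ℝ) ∂(piCube v) :=
        integral_mono (integrable_prodEdge H hf hbd) (integrable_const 1)
          (fun x => Finset.prod_le_one (fun e _ => (hbd _ _).1) (fun e _ => (hbd _ _).2))
    _ = 1 := by simp

lemma homDensity_mono_ae {v : ℕ} (H : SimpleGraph (Fin v)) [DecidableRel H.Adj]
    {f g : ℝ → ℝ → ℝ} (hf : Measurable (Function.uncurry f)) (hg : Measurable (Function.uncurry g))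
    (hfb : ∀ x y, f x y ∈ Set.Icc (0:ℝ) 1) (hgb : ∀ x y, g x y ∈ Set.Icc (0:ℝ) 1)
    (hle : ∀ᵐ q ∂(volume.restrict unitSq), f q.1 q.2 ≤ g q.1 q.2) :
    homDensity H f ≤ homDensity H g := by
  rw [homDensity_eq, homDensity_eq]
  refine integral_mono_ae (integrable_prodEdge H hf hfb) (integrable_prodEdge H hg hgb) ?_
  have hae : ∀ e ∈ edges H, ∀ᵐ x ∂(piCube v), f (x e.1) (x e.2) ≤ g (x e.1) (x e.2) := by
    intro e he
    have hij : e.1 ≠ e.2 := ne_of_lt (Finset.mem_filter.mp he).2.1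
    exact (measurePreserving_pair hij).quasiMeasurePreserving.ae hle
  have hball : ∀ᵐ x ∂(piCube v), ∀ e ∈ (edges H : Set (Fin v × Fin v)),
      f (x e.1) (x e.2) ≤ g (x e.1) (x e.2) :=
    (ae_ball_iff (Finset.countable_toSet (edges H))).mpr fun e he =>
      hae e (Finset.mem_coe.mp he)
  filter_upwards [hball] with x hx
  exact Finset.prod_le_prod (fun e _ => (hfb _ _).1)
    (fun e he => hx e (Finset.mem_coe.mpr he))

lemma prod_convex_bound {ι : Type*} (E : Finset ι) (a d : ι → ℝ)
    (ha : ∀ e, 0 ≤ a e) (hd : ∀ e, 0 ≤ d e) (had : ∀ e, a e + d e ≤ 1)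
    {u : ℝ} (hu0 : 0 ≤ u) (hu1 : u ≤ 1) :
    u ^ E.card * ∏ e ∈ E, (a e + d e) ≤ ∏ e ∈ E, (a e + u * d e) ∧
    (1 - u ^ E.card) * ∏ e ∈ E, a e + u ^ E.card * ∏ e ∈ E, (a e + d e)
      ≤ ∏ e ∈ E, (a e + u * d e) := by
  classical
  induction E using Finset.induction_on with
  | empty => simp
  | insert _ _ he ih =>
    rename_i e E
    obtain ⟨ih1, ih2⟩ := ih
    rw [Finset.prod_insert he, Finset.prod_insert he, Finset.prod_insert he,
      Finset.card_insert_of_notMem he]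
    set A := ∏ e ∈ E, a e with hA
    set B := ∏ e ∈ E, (a e + d e) with hB
    set L := ∏ e ∈ E, (a e + u * d e) with hL
    have hA0 : 0 ≤ A := Finset.prod_nonneg fun e _ => ha e
    have hB0 : 0 ≤ B := Finset.prod_nonneg fun e _ => by nlinarith [ha e, hd e]
    have hAB : A ≤ B := Finset.prod_le_prod (fun e _ => ha e) (fun e _ => by nlinarith [hd e])
    have hun : u ^ (E.card + 1) ≤ u ^ E.card := pow_le_pow_of_le_one hu0 hu1 (Nat.le_succ _)
    have hun0 : 0 ≤ u ^ E.card := pow_nonneg hu0 _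
    constructor
    · have h1 : u * (a e + d e) ≤ a e + u * d e := by nlinarith [ha e]
      calc u ^ (E.card + 1) * ((a e + d e) * B) = (u * (a e + d e)) * (u ^ E.card * B) := by ring
        _ ≤ (a e + u * d e) * L :=
          mul_le_mul h1 ih1 (by positivity) (by nlinarith [ha e, hd e])
    · have F1 := mul_le_mul_of_nonneg_left ih2 (ha e)
      have F2 := mul_le_mul_of_nonneg_left ih1 (mul_nonneg hu0 (hd e))
      have F3 : 0 ≤ a e * ((u ^ E.card - u ^ (E.card + 1)) * (B - A)) :=
        mul_nonneg (ha e) (mul_nonneg (sub_nonneg.mpr hun) (sub_nonneg.mpr hAB))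
      rw [pow_succ] at F3 ⊢
      nlinarith [F1, F2, F3]


open Classical in
/-- The pointwise largest element of `W_Ω` above `g`. -/
def gmaxF (W₀ g : ℝ → ℝ → ℝ) : ℝ → ℝ → ℝ := fun x y =>
  if (x, y) ∈ OmegaSet W₀ then 1 else g x y

def midF (W₀ g : ℝ → ℝ → ℝ) (u : ℝ) : ℝ → ℝ → ℝ := fun x y =>
  g x y + u * (gmaxF W₀ g x y - g x y)

lemma measurableSet_Omega {W₀ : ℝ → ℝ → ℝ} (hW₀ : Measurable (Function.uncurry W₀)) :
    MeasurableSet (OmegaSet W₀) := by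
  have h : OmegaSet W₀ = unitSq ∩ (Function.uncurry W₀) ⁻¹' (Set.Ioo 0 1) := rfl
  rw [h]
  exact measurableSet_unitSq.inter (hW₀ measurableSet_Ioo)

lemma gmaxF_meas {W₀ g : ℝ → ℝ → ℝ} (hW₀ : Measurable (Function.uncurry W₀))
    (hg : Measurable (Function.uncurry g)) :
    Measurable (Function.uncurry (gmaxF W₀ g)) := by
  classical
  have h : Function.uncurry (gmaxF W₀ g)
      = fun q : ℝ × ℝ => if q ∈ OmegaSet W₀ then (1:ℝ) else g q.1 q.2 := rfl
  rw [h]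
  exact Measurable.ite (measurableSet_Omega hW₀) measurable_const hg

lemma gmaxF_bd {W₀ g : ℝ → ℝ → ℝ} (hg : ∀ x y, g x y ∈ Set.Icc (0:ℝ) 1) :
    ∀ x y, gmaxF W₀ g x y ∈ Set.Icc (0:ℝ) 1 := by
  intro x y
  unfold gmaxF
  split
  · norm_num
  · exact hg x y

lemma le_gmaxF {W₀ g : ℝ → ℝ → ℝ} (hg : ∀ x y, g x y ∈ Set.Icc (0:ℝ) 1) :
    ∀ x y, g x y ≤ gmaxF W₀ g x y := by
  intro x y
  unfold gmaxF
  split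
  · exact (hg x y).2
  · exact le_rfl

lemma midF_meas {W₀ g : ℝ → ℝ → ℝ} (hW₀ : Measurable (Function.uncurry W₀))
    (hg : Measurable (Function.uncurry g)) (u : ℝ) :
    Measurable (Function.uncurry (midF W₀ g u)) := by
  have h : Function.uncurry (midF W₀ g u)
      = fun q : ℝ × ℝ => Function.uncurry g q
          + u * (Function.uncurry (gmaxF W₀ g) q - Function.uncurry g q) := rfl
  rw [h]
  exact hg.add (((gmaxF_meas hW₀ hg).sub hg).const_mul u)

lemma midF_bd {W₀ g : ℝ → ℝ → ℝ} (hg : ∀ x y, g x y ∈ Set.Icc (0:ℝ) 1)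
    {u : ℝ} (hu0 : 0 ≤ u) (hu1 : u ≤ 1) :
    ∀ x y, midF W₀ g u x y ∈ Set.Icc (0:ℝ) 1 := by
  intro x y
  have h1 := hg x y
  have h2 := gmaxF_bd (W₀ := W₀) hg x y
  have h3 := le_gmaxF (W₀ := W₀) hg x y
  simp only [Set.mem_Icc] at h1 h2 ⊢
  unfold midF
  constructor
  · nlinarith
  · nlinarith

lemma midF_le_gplus {W₀ g : ℝ → ℝ → ℝ} (hg : ∀ x y, g x y ∈ Set.Icc (0:ℝ) 1)
    {η u : ℝ} (hu0 : 0 ≤ u) (hu1 : u ≤ 1) (huη : u ≤ η) :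
    ∀ x y, midF W₀ g u x y ≤ gplus W₀ g η x y := by
  intro x y
  have h1 := hg x y
  simp only [Set.mem_Icc] at h1
  unfold midF gmaxF gplus
  by_cases h : (x, y) ∈ OmegaSet W₀
  · simp only [h, if_true]
    refine le_min ?_ ?_
    · nlinarith
    · nlinarith
  · simp only [h, if_false]
    ring_nf
    exact le_rfl

lemma ae_le_gmaxF {W₀ g g' : ℝ → ℝ → ℝ} (hW₀ : Measurable (Function.uncurry W₀))
    (hg'bd : ∀ x y, g' x y ∈ Set.Icc (0:ℝ) 1)
    (hgae : ∀ᵐ q ∂(volume.restrict (unitSq \ OmegaSet W₀)), g q.1 q.2 = W₀ q.1 q.2)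
    (hg'ae : ∀ᵐ q ∂(volume.restrict (unitSq \ OmegaSet W₀)), g' q.1 q.2 = W₀ q.1 q.2) :
    ∀ᵐ q ∂(volume.restrict unitSq), g' q.1 q.2 ≤ gmaxF W₀ g q.1 q.2 := by
  have hΩ := measurableSet_Omega hW₀
  have hm : MeasurableSet (unitSq \ OmegaSet W₀) := measurableSet_unitSq.diff hΩ
  have Z1 := ae_iff.mp hgae
  have Z2 := ae_iff.mp hg'ae
  rw [Measure.restrict_apply' hm] at Z1 Z2
  rw [ae_iff, Measure.restrict_apply' measurableSet_unitSq]
  refine measure_mono_null ?_ (measure_union_null Z2 Z1)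
  intro q hq
  obtain ⟨hq1, hq2⟩ := hq
  simp only [Set.mem_setOf_eq] at hq1
  by_cases hΩq : q ∈ OmegaSet W₀
  · exfalso
    apply hq1
    have hval : gmaxF W₀ g q.1 q.2 = 1 := by
      unfold gmaxF
      rw [if_pos]
      simpa using hΩq
    rw [hval]
    exact (hg'bd q.1 q.2).2
  · have hval : gmaxF W₀ g q.1 q.2 = g q.1 q.2 := by
      unfold gmaxF
      rw [if_neg]
      simpa using hΩq
    rw [hval] at hq1
    have hqd : q ∈ unitSq \ OmegaSet W₀ := ⟨hq2, hΩq⟩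
    by_cases hgw : g q.1 q.2 = W₀ q.1 q.2
    · left
      refine ⟨?_, hqd⟩
      simp only [Set.mem_setOf_eq]
      intro hg'w
      exact hq1 (by rw [hg'w, hgw])
    · right
      exact ⟨hgw, hqd⟩

/-- boosting the homomorphism density by increasing the graphon
by `η` on `Ω`: `t(H, g^{+η}) ≥ t(H,g) + c (t_max − t(H,g))²` with
`c = c(γ,H,η)`. -/
theorem stmt13 {v m : ℕ} (H : SimpleGraph (Fin v)) [DecidableRel H.Adj]
    (γ : Fin m → ℝ) (hγ : GoodWidths γ) (η : ℝ) (hη : 0 < η) :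
    ∃ c : ℝ, 0 < c ∧ c ≤ 1 ∧
      ∀ (W₀ : ℝ → ℝ → ℝ) (P : Fin m → Fin m → ℝ), IsGraphon W₀ →
        IsBlockGraphon γ P W₀ →
        ∀ g : ℝ → ℝ → ℝ, MemWOmega W₀ g →
          homDensity H g +
              c * (sSup {s : ℝ | ∃ g', MemWOmega W₀ g' ∧ s = homDensity H g'} -
                  homDensity H g) ^ 2 ≤
            homDensity H (gplus W₀ g η) := by
  classical
  set u : ℝ := min η 1 with hu_def
  have hu0 : 0 < u := lt_min hη one_pos
  have hu1 : u ≤ 1 := min_le_right _ _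
  have huη : u ≤ η := min_le_left _ _
  set N := (edges H).card with hN
  refine ⟨u ^ N, pow_pos hu0 N, pow_le_one₀ hu0.le hu1, ?_⟩
  intro W₀ P hW₀ hblock g hg
  obtain ⟨⟨hgmeas, hgbd, hgsymm⟩, hgae⟩ := hg
  set S : Set ℝ := {s : ℝ | ∃ g', MemWOmega W₀ g' ∧ s = homDensity H g'} with hS
  have hSmem : homDensity H g ∈ S := ⟨g, ⟨⟨hgmeas, hgbd, hgsymm⟩, hgae⟩, rfl⟩
  have hbdd : BddAbove S := by
    refine ⟨1, ?_⟩
    rintro s ⟨g', hg', rfl⟩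
    exact homDensity_le_one H hg'.1.1 hg'.1.2.1
  have hgmaxm := gmaxF_meas (g := g) hW₀.1 hgmeas
  have hgmaxb := gmaxF_bd (W₀ := W₀) hgbd
  have hTle : sSup S ≤ homDensity H (gmaxF W₀ g) := by
    refine Real.sSup_le ?_ (homDensity_nonneg H hgmaxb)
    rintro s ⟨g', hg', rfl⟩
    exact homDensity_mono_ae H hg'.1.1 hgmaxm hg'.1.2.1 hgmaxb
      (ae_le_gmaxF hW₀.1 hg'.1.2.1 hgae hg'.2)
  have hmidm := midF_meas (g := g) hW₀.1 hgmeas u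
  have hmidb := midF_bd (W₀ := W₀) hgbd hu0.le hu1
  have hgpm : Measurable (Function.uncurry (gplus W₀ g η)) := by
    have h : Function.uncurry (gplus W₀ g η)
        = fun q : ℝ × ℝ => if q ∈ OmegaSet W₀ then min (g q.1 q.2 + η) 1 else g q.1 q.2 := rfl
    rw [h]
    exact Measurable.ite (measurableSet_Omega hW₀.1)
      ((hgmeas.add_const η).min measurable_const) hgmeas
  have hgpb : ∀ x y, gplus W₀ g η x y ∈ Set.Icc (0:ℝ) 1 := by
    intro x y
    have h1 := hgbd x y
    simp only [Set.mem_Icc] at h1 ⊢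
    unfold gplus
    split
    · constructor
      · refine le_min ?_ ?_ <;> nlinarith
      · exact min_le_right _ _
    · exact h1
  have key : (1 - u ^ N) * homDensity H g + u ^ N * homDensity H (gmaxF W₀ g)
      ≤ homDensity H (midF W₀ g u) := by
    rw [homDensity_eq H g, homDensity_eq H (gmaxF W₀ g), homDensity_eq H (midF W₀ g u),
      ← integral_const_mul, ← integral_const_mul,
      ← integral_add ((integrable_prodEdge H hgmeas hgbd).const_mul _)
        ((integrable_prodEdge H hgmaxm hgmaxb).const_mul _)]
    refine integral_mono
      (((integrable_prodEdge H hgmeas hgbd).const_mul _).add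
        ((integrable_prodEdge H hgmaxm hgmaxb).const_mul _))
      (integrable_prodEdge H hmidm hmidb) fun x => ?_
    have hpc := (prod_convex_bound (edges H) (fun e => g (x e.1) (x e.2))
      (fun e => gmaxF W₀ g (x e.1) (x e.2) - g (x e.1) (x e.2))
      (fun e => (hgbd _ _).1)
      (fun e => sub_nonneg.mpr (le_gmaxF (W₀ := W₀) hgbd _ _))
      (fun e => by beta_reduce; have := (gmaxF_bd (W₀ := W₀) hgbd (x e.1) (x e.2)).2; linarith)
      hu0.le hu1).2
    have h1 : ∏ e ∈ edges H,
        (g (x e.1) (x e.2) + (gmaxF W₀ g (x e.1) (x e.2) - g (x e.1) (x e.2)))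
        = ∏ e ∈ edges H, gmaxF W₀ g (x e.1) (x e.2) :=
      Finset.prod_congr rfl fun e _ => by ring
    rw [h1] at hpc
    exact hpc
  have hmono : homDensity H (midF W₀ g u) ≤ homDensity H (gplus W₀ g η) :=
    homDensity_mono_ae H hmidm hgpm hmidb hgpb
      (ae_of_all _ fun q => midF_le_gplus hgbd hu0.le hu1 huη q.1 q.2)
  have h4 : homDensity H g ≤ sSup S := le_csSup hbdd hSmem
  have hT1 : sSup S ≤ 1 := by
    refine Real.sSup_le ?_ zero_le_one
    rintro s ⟨g', hg', rfl⟩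
    exact homDensity_le_one H hg'.1.1 hg'.1.2.1
  have h6 : 0 ≤ homDensity H g := homDensity_nonneg H hgbd
  have hc0 : (0:ℝ) ≤ u ^ N := (pow_pos hu0 N).le
  have hstep : homDensity H g + u ^ N * (sSup S - homDensity H g) ^ 2
      ≤ (1 - u ^ N) * homDensity H g + u ^ N * sSup S := by
    nlinarith [mul_nonneg hc0 (mul_nonneg (sub_nonneg.mpr h4)
      (sub_nonneg.mpr (by linarith : sSup S - homDensity H g ≤ 1)))]
  have hstep2 : (1 - u ^ N) * homDensity H g + u ^ N * sSup S
      ≤ (1 - u ^ N) * homDensity H g + u ^ N * homDensity H (gmaxF W₀ g) := by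
    nlinarith [mul_le_mul_of_nonneg_left hTle hc0]
  linarith


end GraphonLDP
end
end

section
/- Let Ω_0, Ω_P, Ω_1 be pairwise disjoint measurable subsets of [0,1]^2, each invariant under the coordinate swap (x,y) ↦ (y,x), whose union is [0,1]^2. For p ∈ (0,1), let W_p be the graphon equal to 0 on Ω_0, p on Ω_P, and 1 on Ω_1. Let f be a graphon with f = 0 almost everywhere on Ω_0 and f = 1 almost everywhere on Ω_1. Then lim_{p→0^+} I_{W_p}(f) / log(1/p) = (1/2)·( ∫_{[0,1]^2} f(x,y) dx dy − λ(Ω_1) ). -/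
open MeasureTheory Set Filter
open scoped ENNReal NNReal

noncomputable section

namespace GraphonLDP

/-! ### Auxiliary lemmas for Statement 14 -/

lemma aux_abs_mul_log {u : ℝ} (hu : u ∈ Set.Icc (0:ℝ) 1) : |u * Real.log u| ≤ 1 := by
  rcases eq_or_lt_of_le hu.1 with h | h
  · simp [← h]
  · have h2 := Real.abs_log_mul_self_lt u h hu.2
    rw [mul_comm]
    exact h2.le

lemma hRel_nonneg {p u : ℝ} (hp : p ∈ Set.Ioo (0:ℝ) 1) (hu : u ∈ Set.Icc (0:ℝ) 1) :
    0 ≤ hRel p u := by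
  obtain ⟨hp0, hp1⟩ := hp
  obtain ⟨hu0, hu1⟩ := hu
  rcases eq_or_lt_of_le hu0 with h0 | h0
  · rw [hRel, ← h0]
    simp only [zero_mul, sub_zero, one_mul, zero_add]
    apply Real.log_nonneg
    rw [le_div_iff₀ (by linarith)]
    linarith
  rcases eq_or_lt_of_le hu1 with h1 | h1
  · rw [hRel, h1]
    simp only [sub_self, zero_mul, add_zero, one_mul]
    apply Real.log_nonneg
    rw [le_div_iff₀ hp0]
    linarith
  · have k1 : Real.log (p / u) ≤ p / u - 1 := Real.log_le_sub_one_of_pos (div_pos hp0 h0)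
    have k2 : Real.log ((1 - p) / (1 - u)) ≤ (1 - p) / (1 - u) - 1 :=
      Real.log_le_sub_one_of_pos (div_pos (by linarith) (by linarith))
    have e1 : Real.log (u / p) = -Real.log (p / u) := by rw [← Real.log_inv, inv_div]
    have e2 : Real.log ((1 - u) / (1 - p)) = -Real.log ((1 - p) / (1 - u)) := by
      rw [← Real.log_inv, inv_div]
    have m1 : u * (p / u) = p := by field_simp
    have m2 : (1 - u) * ((1 - p) / (1 - u)) = 1 - p := by
      rw [mul_comm]
      exact div_mul_cancel₀ _ (ne_of_gt (by linarith : (0:ℝ) < 1 - u))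
    have b1 : u * Real.log (p / u) ≤ p - u := by
      have := mul_le_mul_of_nonneg_left k1 h0.le
      rw [mul_sub, m1, mul_one] at this
      exact this
    have b2 : (1 - u) * Real.log ((1 - p) / (1 - u)) ≤ (1 - p) - (1 - u) := by
      have := mul_le_mul_of_nonneg_left k2 (by linarith : (0:ℝ) ≤ 1 - u)
      rw [mul_sub, m2, mul_one] at this
      exact this
    rw [hRel, e1, e2]
    nlinarith [b1, b2]

lemma hRel_eq {p u : ℝ} (hp : p ∈ Set.Ioo (0:ℝ) 1) :
    hRel p u = (u * Real.log u + (1 - u) * Real.log (1 - u))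
      - Real.log p * u - Real.log (1 - p) * (1 - u) := by
  obtain ⟨hp0, hp1⟩ := hp
  have t1 : u * Real.log (u / p) = u * Real.log u - Real.log p * u := by
    rcases eq_or_ne u 0 with h | h
    · simp [h]
    · rw [Real.log_div h hp0.ne']; ring
  have t2 : (1 - u) * Real.log ((1 - u) / (1 - p))
      = (1 - u) * Real.log (1 - u) - Real.log (1 - p) * (1 - u) := by
    rcases eq_or_ne u 1 with h | h
    · simp [h]
    · rw [Real.log_div (sub_ne_zero.2 (Ne.symm h)) (ne_of_gt (by linarith : (0:ℝ) < 1 - p))]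
      ring
  rw [hRel, t1, t2]
  ring

lemma integrableOn_of_bound {g : ℝ × ℝ → ℝ} {S : Set (ℝ × ℝ)} (hg : Measurable g)
    (hS : volume S < ⊤) {Cb : ℝ} (hb : ∀ q, |g q| ≤ Cb) : IntegrableOn g S volume := by
  refine Integrable.mono' (g := fun _ => Cb) (integrableOn_const hS.ne)
    hg.aestronglyMeasurable (ae_of_all _ fun q => hb q)

/-- `lim_{p→0⁺} I_{W_p}(f)/log(1/p) = (1/2)(∫ f − λ(Ω₁))`. -/
theorem stmt14 (Ω0 ΩP Ω1 : Set (ℝ × ℝ))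
    (h0 : MeasurableSet Ω0) (hPm : MeasurableSet ΩP) (h1 : MeasurableSet Ω1)
    (hunion : Ω0 ∪ ΩP ∪ Ω1 = unitSq)
    (hd1 : Disjoint Ω0 ΩP) (hd2 : Disjoint Ω0 Ω1) (hd3 : Disjoint ΩP Ω1)
    (hsym0 : ∀ x y : ℝ, (x, y) ∈ Ω0 ↔ (y, x) ∈ Ω0)
    (hsymP : ∀ x y : ℝ, (x, y) ∈ ΩP ↔ (y, x) ∈ ΩP)
    (hsym1 : ∀ x y : ℝ, (x, y) ∈ Ω1 ↔ (y, x) ∈ Ω1)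
    (W : ℝ → ℝ → ℝ → ℝ)
    (hW : ∀ p ∈ Set.Ioo (0:ℝ) 1, IsGraphon (W p) ∧
      (∀ q ∈ Ω0, W p q.1 q.2 = 0) ∧ (∀ q ∈ ΩP, W p q.1 q.2 = p) ∧
      (∀ q ∈ Ω1, W p q.1 q.2 = 1))
    (f : ℝ → ℝ → ℝ) (hf : IsGraphon f)
    (hf0 : ∀ᵐ q ∂(volume.restrict Ω0), f q.1 q.2 = 0)
    (hf1 : ∀ᵐ q ∂(volume.restrict Ω1), f q.1 q.2 = 1) :
    Filter.Tendsto (fun p : ℝ => (Ient (W p) f).toReal / Real.log (1 / p))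
      (nhdsWithin 0 (Set.Ioi 0))
      (nhds ((1 / 2) * ((∫ q in unitSq, f q.1 q.2) - (volume Ω1).toReal))) := by

  obtain ⟨mfu, hfmem, hfsymm⟩ := hf
  have mf : Measurable (fun q : ℝ × ℝ => f q.1 q.2) := mfu
  have hsub0 : Ω0 ⊆ unitSq := by
    rw [← hunion]; exact subset_union_left.trans subset_union_left
  have hsubP : ΩP ⊆ unitSq := by
    rw [← hunion]; exact subset_union_right.trans subset_union_left
  have hsub1 : Ω1 ⊆ unitSq := by
    rw [← hunion]; exact subset_union_right
  have hvolU : volume unitSq < ⊤ := (isCompact_Icc.prod isCompact_Icc).measure_lt_top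
  have hintf : ∀ S : Set (ℝ × ℝ), S ⊆ unitSq →
      IntegrableOn (fun q : ℝ × ℝ => f q.1 q.2) S volume := fun S hS =>
    integrableOn_of_bound mf (lt_of_le_of_lt (measure_mono hS) hvolU)
      (fun q => abs_le.2 ⟨by linarith [(hfmem q.1 q.2).1], (hfmem q.1 q.2).2⟩)
  have hvolP : volume ΩP < ⊤ := lt_of_le_of_lt (measure_mono hsubP) hvolU
  have hint1f : IntegrableOn (fun q : ℝ × ℝ => 1 - f q.1 q.2) ΩP volume :=
    (integrableOn_const hvolP.ne).sub (hintf ΩP hsubP)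
  have mphi : Measurable (fun q : ℝ × ℝ =>
      f q.1 q.2 * Real.log (f q.1 q.2) + (1 - f q.1 q.2) * Real.log (1 - f q.1 q.2)) :=
    (mf.mul (Real.measurable_log.comp mf)).add
      ((measurable_const.sub mf).mul (Real.measurable_log.comp (measurable_const.sub mf)))
  have hintphi : IntegrableOn (fun q : ℝ × ℝ =>
      f q.1 q.2 * Real.log (f q.1 q.2) + (1 - f q.1 q.2) * Real.log (1 - f q.1 q.2)) ΩP volume := by
    apply integrableOn_of_bound mphi hvolP (Cb := 2)
    intro q
    have h1 := aux_abs_mul_log (hfmem q.1 q.2)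
    have h2 := aux_abs_mul_log (show (1 - f q.1 q.2) ∈ Set.Icc (0:ℝ) 1 from
      ⟨by linarith [(hfmem q.1 q.2).2], by linarith [(hfmem q.1 q.2).1]⟩)
    calc |f q.1 q.2 * Real.log (f q.1 q.2) + (1 - f q.1 q.2) * Real.log (1 - f q.1 q.2)|
        ≤ |f q.1 q.2 * Real.log (f q.1 q.2)| + |(1 - f q.1 q.2) * Real.log (1 - f q.1 q.2)| :=
          abs_add_le _ _
      _ ≤ 2 := by linarith
  set C' := ∫ q in ΩP, (f q.1 q.2 * Real.log (f q.1 q.2)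
      + (1 - f q.1 q.2) * Real.log (1 - f q.1 q.2)) with hC'
  set A' := ∫ q in ΩP, f q.1 q.2 with hA'
  set D' := ∫ q in ΩP, (1 - f q.1 q.2) with hD'
  -- Key identity for p ∈ (0,1)
  have key : ∀ p ∈ Set.Ioo (0:ℝ) 1, (Ient (W p) f).toReal
      = (1 / 2) * (C' - Real.log p * A' - Real.log (1 - p) * D') := by
    intro p hp
    obtain ⟨hWg, hW0, hWP, hW1⟩ := hW p hp
    have e0 : ∫⁻ q in Ω0, relEnt (W p q.1 q.2) (f q.1 q.2) = 0 := by
      have h : (fun q : ℝ × ℝ => relEnt (W p q.1 q.2) (f q.1 q.2))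
          =ᵐ[volume.restrict Ω0] (fun _ => (0 : ℝ≥0∞)) := by
        filter_upwards [hf0, ae_restrict_mem h0] with q hq hmem
        rw [hW0 q hmem, hq]
        simp [relEnt]
      rw [lintegral_congr_ae h, lintegral_zero]
    have e1 : ∫⁻ q in Ω1, relEnt (W p q.1 q.2) (f q.1 q.2) = 0 := by
      have h : (fun q : ℝ × ℝ => relEnt (W p q.1 q.2) (f q.1 q.2))
          =ᵐ[volume.restrict Ω1] (fun _ => (0 : ℝ≥0∞)) := by
        filter_upwards [hf1, ae_restrict_mem h1] with q hq hmem
        rw [hW1 q hmem, hq]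
        simp [relEnt]
      rw [lintegral_congr_ae h, lintegral_zero]
    have hIntP : Integrable (fun q : ℝ × ℝ => hRel p (f q.1 q.2)) (volume.restrict ΩP) := by
      have hcomb : Integrable (fun q : ℝ × ℝ =>
          (f q.1 q.2 * Real.log (f q.1 q.2) + (1 - f q.1 q.2) * Real.log (1 - f q.1 q.2))
            - Real.log p * f q.1 q.2 - Real.log (1 - p) * (1 - f q.1 q.2))
          (volume.restrict ΩP) :=
        (hintphi.sub ((hintf ΩP hsubP).const_mul (Real.log p))).sub
          (hint1f.const_mul (Real.log (1 - p)))
      exact hcomb.congr (ae_of_all _ fun q => (hRel_eq hp).symm)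
    have hnn : (0 : ℝ × ℝ → ℝ) ≤ᵐ[volume.restrict ΩP] fun q => hRel p (f q.1 q.2) :=
      ae_of_all _ fun q => hRel_nonneg hp (hfmem q.1 q.2)
    have eP : ∫⁻ q in ΩP, relEnt (W p q.1 q.2) (f q.1 q.2)
        = ENNReal.ofReal (∫ q in ΩP, hRel p (f q.1 q.2)) := by
      have h : (fun q : ℝ × ℝ => relEnt (W p q.1 q.2) (f q.1 q.2))
          =ᵐ[volume.restrict ΩP] (fun q => ENNReal.ofReal (hRel p (f q.1 q.2))) := by
        filter_upwards [ae_restrict_mem hPm] with q hmem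
        rw [hWP q hmem]
        simp [relEnt, hRel, hp.1.ne', hp.2.ne]
      rw [lintegral_congr_ae h, ← ofReal_integral_eq_lintegral_ofReal hIntP hnn]
    have hsplit : ∫⁻ q in unitSq, relEnt (W p q.1 q.2) (f q.1 q.2)
        = (∫⁻ q in Ω0, relEnt (W p q.1 q.2) (f q.1 q.2))
          + (∫⁻ q in ΩP, relEnt (W p q.1 q.2) (f q.1 q.2))
          + (∫⁻ q in Ω1, relEnt (W p q.1 q.2) (f q.1 q.2)) := by
      rw [← hunion, lintegral_union h1 (hd2.union_left hd3), lintegral_union hPm hd1]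
    have hIeq : ∫ q in ΩP, hRel p (f q.1 q.2)
        = C' - Real.log p * A' - Real.log (1 - p) * D' := by
      calc ∫ q in ΩP, hRel p (f q.1 q.2)
          = ∫ q in ΩP, ((f q.1 q.2 * Real.log (f q.1 q.2)
              + (1 - f q.1 q.2) * Real.log (1 - f q.1 q.2))
              - Real.log p * f q.1 q.2 - Real.log (1 - p) * (1 - f q.1 q.2)) :=
            integral_congr_ae (ae_of_all _ fun q => hRel_eq hp)
        _ = (∫ q in ΩP, ((f q.1 q.2 * Real.log (f q.1 q.2)
              + (1 - f q.1 q.2) * Real.log (1 - f q.1 q.2))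
              - Real.log p * f q.1 q.2))
            - ∫ q in ΩP, Real.log (1 - p) * (1 - f q.1 q.2) :=
            integral_sub (hintphi.sub ((hintf ΩP hsubP).const_mul (Real.log p)))
              (hint1f.const_mul (Real.log (1 - p)))
        _ = ((∫ q in ΩP, (f q.1 q.2 * Real.log (f q.1 q.2)
              + (1 - f q.1 q.2) * Real.log (1 - f q.1 q.2)))
            - ∫ q in ΩP, Real.log p * f q.1 q.2)
            - ∫ q in ΩP, Real.log (1 - p) * (1 - f q.1 q.2) := by
            rw [integral_sub hintphi ((hintf ΩP hsubP).const_mul (Real.log p))]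
        _ = C' - Real.log p * A' - Real.log (1 - p) * D' := by
            rw [integral_const_mul, integral_const_mul, hC', hA', hD']
    have hnn' : 0 ≤ ∫ q in ΩP, hRel p (f q.1 q.2) :=
      integral_nonneg fun q => hRel_nonneg hp (hfmem q.1 q.2)
    simp only [Ient]
    rw [hsplit, e0, e1, eP, zero_add, add_zero, ENNReal.toReal_mul,
      ENNReal.toReal_ofReal hnn', hIeq]
    norm_num
  -- Total integral decomposition
  have hI0 : ∫ q in Ω0, f q.1 q.2 = 0 := by
    have h : (fun q : ℝ × ℝ => f q.1 q.2) =ᵐ[volume.restrict Ω0] (fun _ => (0:ℝ)) := hf0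
    rw [integral_congr_ae h, integral_zero]
  have hI1 : ∫ q in Ω1, f q.1 q.2 = (volume Ω1).toReal := by
    have h : (fun q : ℝ × ℝ => f q.1 q.2) =ᵐ[volume.restrict Ω1] (fun _ => (1:ℝ)) := hf1
    rw [integral_congr_ae h, setIntegral_const]
    simp [Measure.real]
  have htot : ∫ q in unitSq, f q.1 q.2 = A' + (volume Ω1).toReal := by
    rw [← hunion, setIntegral_union (hd2.union_left hd3) h1
        (hintf _ (union_subset hsub0 hsubP)) (hintf _ hsub1),
      setIntegral_union hd1 hPm (hintf _ hsub0) (hintf _ hsubP), hI0, hI1, hA', zero_add]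
  have hfinal : (1 / 2 : ℝ) * ((∫ q in unitSq, f q.1 q.2) - (volume Ω1).toReal)
      = (1 / 2) * A' := by rw [htot]; ring
  rw [hfinal]
  -- Tendsto facts
  have h1p : Tendsto (fun p : ℝ => 1 / p) (nhdsWithin 0 (Set.Ioi 0)) atTop := by
    simpa [one_div] using tendsto_inv_nhdsGT_zero
  have hLtop : Tendsto (fun p : ℝ => Real.log (1 / p)) (nhdsWithin 0 (Set.Ioi 0)) atTop :=
    Real.tendsto_log_atTop.comp h1p
  have hLinv : Tendsto (fun p : ℝ => (Real.log (1 / p))⁻¹) (nhdsWithin 0 (Set.Ioi 0)) (nhds 0) :=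
    hLtop.inv_tendsto_atTop
  have hlog1p : Tendsto (fun p : ℝ => Real.log (1 - p)) (nhdsWithin 0 (Set.Ioi 0)) (nhds 0) := by
    have hcont : ContinuousAt (fun p : ℝ => Real.log (1 - p)) 0 :=
      (Real.continuousAt_log (by norm_num : (1:ℝ) - 0 ≠ 0)).comp
        ((continuous_const.sub continuous_id).continuousAt)
    have h := hcont.tendsto
    simp only [sub_zero, Real.log_one] at h
    exact h.mono_left nhdsWithin_le_nhds
  have hH : Tendsto (fun p : ℝ =>
      (1 / 2 : ℝ) * (C' * (Real.log (1 / p))⁻¹ + A'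
        - Real.log (1 - p) * (D' * (Real.log (1 / p))⁻¹)))
      (nhdsWithin 0 (Set.Ioi 0)) (nhds ((1 / 2) * A')) := by
    have h := (((hLinv.const_mul C').add (tendsto_const_nhds (x := A'))).sub
      (hlog1p.mul (hLinv.const_mul D'))).const_mul (1 / 2 : ℝ)
    simpa using h
  refine hH.congr' ?_
  filter_upwards [Ioo_mem_nhdsGT_of_mem (by norm_num : (0:ℝ) ∈ Set.Ico (0:ℝ) 1)] with p hp
  rw [key p hp]
  have hlp : Real.log p < 0 := Real.log_neg hp.1 hp.2
  set L := Real.log (1 / p) with hLdef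
  have hLval : L = -Real.log p := by rw [hLdef, one_div, Real.log_inv]
  have hLpos : 0 < L := by rw [hLval]; linarith
  have hlogp : Real.log p = -L := by rw [hLval]; ring
  rw [hlogp]
  field_simp
  ring

end GraphonLDP
end
end

section
/- Let 0 < γ < 1, 0 < p < 1, W_0 = f_p^γ, and let f ∈ W_Ω (that is, f is a graphon vanishing almost everywhere on [0,γ]^2 ∪ (γ,1]^2). Then ∫_{[0,1]^2} f(x,y) dx dy ≤ ‖f‖_op ≤ (1/√2)·‖f‖_2, where ‖f‖_2 = (∫_{[0,1]^2} f(x,y)^2 dx dy)^{1/2}. -/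
open MeasureTheory Set Filter
open scoped ENNReal NNReal

noncomputable section

namespace GraphonLDP

-- === auxiliary lemmas for stmt19 ===
section Stmt19Aux

open MeasureTheory

private lemma sq_integral_mul_le' {α : Type*} [MeasurableSpace α] {μ : Measure α} {f u : α → ℝ}
    (hf : MemLp f 2 μ) (hu : MemLp u 2 μ) :
    (∫ a, f a * u a ∂μ) ^ 2 ≤ (∫ a, (f a) ^ 2 ∂μ) * (∫ a, (u a) ^ 2 ∂μ) := by
  have h2 : (2:ℝ).HolderConjugate 2 := Real.HolderConjugate.two_two
  have hf' : MemLp f (ENNReal.ofReal (2:ℝ)) μ := by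
    convert hf using 2; simp [ENNReal.ofReal_ofNat]
  have hu' : MemLp u (ENNReal.ofReal (2:ℝ)) μ := by
    convert hu using 2; simp [ENNReal.ofReal_ofNat]
  have H := integral_mul_norm_le_Lp_mul_Lq h2 hf' hu'
  have h1 : |∫ a, f a * u a ∂μ| ≤ ∫ a, ‖f a‖ * ‖u a‖ ∂μ := by
    calc |∫ a, f a * u a ∂μ| ≤ ∫ a, ‖f a * u a‖ ∂μ := by
          simpa using norm_integral_le_integral_norm (fun a => f a * u a) (μ := μ)
      _ = ∫ a, ‖f a‖ * ‖u a‖ ∂μ := by simp [norm_mul]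
  have hXnn : 0 ≤ ∫ a, ‖f a‖ ^ (2:ℝ) ∂μ :=
    integral_nonneg fun a => Real.rpow_nonneg (norm_nonneg _) _
  have hYnn : 0 ≤ ∫ a, ‖u a‖ ^ (2:ℝ) ∂μ :=
    integral_nonneg fun a => Real.rpow_nonneg (norm_nonneg _) _
  have key : (∫ a, f a * u a ∂μ) ^ 2 ≤
      ((∫ a, ‖f a‖ ^ (2:ℝ) ∂μ) ^ ((1:ℝ)/2) * (∫ a, ‖u a‖ ^ (2:ℝ) ∂μ) ^ ((1:ℝ)/2)) ^ 2 := by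
    rw [← sq_abs]
    exact pow_le_pow_left₀ (abs_nonneg _) (h1.trans H) 2
  calc (∫ a, f a * u a ∂μ) ^ 2 ≤ _ := key
    _ = (∫ a, ‖f a‖ ^ (2:ℝ) ∂μ) * (∫ a, ‖u a‖ ^ (2:ℝ) ∂μ) := by
        rw [mul_pow, ← Real.rpow_natCast (_ ^ ((1:ℝ)/2)) 2, ← Real.rpow_natCast (_ ^ ((1:ℝ)/2)) 2,
          ← Real.rpow_mul hXnn, ← Real.rpow_mul hYnn]
        norm_num
    _ = (∫ a, (f a) ^ 2 ∂μ) * (∫ a, (u a) ^ 2 ∂μ) := by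
        congr 1 <;> refine integral_congr_ae (Filter.Eventually.of_forall fun a => ?_) <;>
          · show ‖_‖ ^ (2:ℝ) = _ ^ 2
            rw [show (2:ℝ) = ((2:ℕ):ℝ) by norm_num, Real.rpow_natCast]
            simp [Real.norm_eq_abs, sq_abs]

private lemma memL2_of_bounded' {α : Type*} [MeasurableSpace α] {μ : Measure α} {s : Set α}
    (hs : μ s ≠ ⊤) {g : α → ℝ} (hg : Measurable g) (hb : ∀ y, |g y| ≤ 1) :
    MemLp g 2 (μ.restrict s) := by
  haveI : IsFiniteMeasure (μ.restrict s) :=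
    ⟨by rwa [Measure.restrict_apply_univ, lt_top_iff_ne_top]⟩
  refine (memLp_two_iff_integrable_sq hg.aestronglyMeasurable).mpr ?_
  refine (integrable_const (1:ℝ)).mono' (hg.pow_const 2).aestronglyMeasurable ?_
  refine Filter.Eventually.of_forall fun y => ?_
  have := hb y
  rw [Real.norm_eq_abs, abs_pow]
  calc |g y| ^ 2 ≤ 1 ^ 2 := pow_le_pow_left₀ (abs_nonneg _) this 2
    _ = 1 := one_pow 2

end Stmt19Aux

section Stmt19Key

open MeasureTheory

private lemma ae_section_zero' {f : ℝ → ℝ → ℝ} (hfm : Measurable (Function.uncurry f))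
    {s : Set ℝ} (hs : MeasurableSet s)
    (h : ∀ᵐ q ∂(volume.restrict (s ×ˢ s)), f q.1 q.2 = 0) :
    ∀ᵐ x ∂(volume.restrict s), ∀ᵐ y ∂(volume.restrict s), f x y = 0 := by
  have hNm : MeasurableSet {q : ℝ × ℝ | f q.1 q.2 ≠ 0} := by
    have : Measurable fun q : ℝ × ℝ => f q.1 q.2 := hfm.comp (measurable_fst.prodMk measurable_snd)
    exact this (measurableSet_singleton 0) |>.compl
  have h0 : volume ({q : ℝ × ℝ | f q.1 q.2 ≠ 0} ∩ s ×ˢ s) = 0 := by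
    have h' := ae_iff.mp h
    rwa [Measure.restrict_apply hNm] at h'
  rw [Measure.volume_eq_prod ℝ ℝ] at h0
  have hsec := Measure.measure_ae_null_of_prod_null h0
  refine ((ae_restrict_mem hs).and (ae_restrict_of_ae hsec)).mono ?_
  rintro x ⟨hxs, hx0⟩
  rw [ae_restrict_iff' hs, ae_iff]
  have hset : {y : ℝ | ¬ (y ∈ s → f x y = 0)}
      = Prod.mk x ⁻¹' ({q : ℝ × ℝ | f q.1 q.2 ≠ 0} ∩ s ×ˢ s) := by
    ext y
    simp only [Set.mem_setOf_eq, Set.mem_preimage, Set.mem_inter_iff, Set.mem_prod]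
    constructor
    · rintro h'; push_neg at h'; exact ⟨h'.2, hxs, h'.1⟩
    · rintro ⟨h1, -, h2⟩ h'; exact h1 (h' h2)
  rw [hset]
  simpa using hx0

end Stmt19Key

section Stmt19Main

open MeasureTheory

set_option maxHeartbeats 1000000 in
private lemma stmt19_key (γ : ℝ) (hγ : 0 < γ) (hγ1 : γ < 1) (f : ℝ → ℝ → ℝ)
    (hf : IsGraphon f)
    (hdiag : ∀ᵐ q ∂(volume.restrict (diagBlocks γ)), f q.1 q.2 = 0)
    (u : ℝ → ℝ) (hu : Measurable u)
    (heLp : eLpNorm u 2 (volume.restrict (Set.Icc (0:ℝ) 1)) ≤ 1) :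
    (∫ x in Set.Icc (0:ℝ) 1, (∫ y in Set.Icc (0:ℝ) 1, f x y * u y) ^ 2)
      ≤ (1/2) * ∫ q in unitSq, (f q.1 q.2) ^ 2 := by
  obtain ⟨hfm, hf01, hfsymm⟩ := hf
  set A : Set ℝ := Set.Icc (0:ℝ) γ with hA
  set B : Set ℝ := Set.Ioc γ 1 with hB
  set I : Set ℝ := Set.Icc (0:ℝ) 1 with hI
  have hABI : A ∪ B = I := Set.Icc_union_Ioc_eq_Icc hγ.le hγ1.le
  have hAI : A ⊆ I := hABI ▸ Set.subset_union_left
  have hBI : B ⊆ I := hABI ▸ Set.subset_union_right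
  have hdisj : Disjoint A B := by
    rw [Set.disjoint_left]; rintro x ⟨-, h1⟩ ⟨h2, -⟩; exact absurd h1 (not_le.mpr h2)
  have hAm : MeasurableSet A := measurableSet_Icc
  have hBm : MeasurableSet B := measurableSet_Ioc
  have hIm : MeasurableSet I := measurableSet_Icc
  have hAfin : volume A ≠ ⊤ := by simp [hA]
  have hBfin : volume B ≠ ⊤ := by simp [hB]
  have hIfin : volume I ≠ ⊤ := by simp [hI]
  have hvolI : volume I = 1 := by
    rw [hI, Real.volume_Icc]; norm_num
  have hf1 : ∀ x y, |f x y| ≤ 1 := fun x y =>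
    abs_le.mpr ⟨by linarith [(hf01 x y).1], (hf01 x y).2⟩
  have hpow : ∀ t : ℝ, t ^ ((2:ℝ≥0∞).toReal) = t ^ (2:ℕ) := by
    intro t
    rw [ENNReal.toReal_ofNat, show (2:ℝ) = ((2:ℕ):ℝ) by norm_num]
    exact Real.rpow_natCast t 2
  have hfxm : ∀ x, Measurable (f x) := fun x => hfm.of_uncurry_left
  have hfxL2 : ∀ (x : ℝ) (s : Set ℝ), volume s ≠ ⊤ → MemLp (f x) 2 (volume.restrict s) :=
    fun x s hs => memL2_of_bounded' hs (hfxm x) (fun y => hf1 x y)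
  -- facts about u
  have huL2 : MemLp u 2 (volume.restrict I) :=
    ⟨hu.aestronglyMeasurable, lt_of_le_of_lt heLp (by norm_num)⟩
  have hu2int : IntegrableOn (fun y => u y ^ 2) I := huL2.integrable_sq
  have huint : IntegrableOn u I := huL2.integrable one_le_two
  have huL2A : MemLp u 2 (volume.restrict A) :=
    huL2.mono_measure (Measure.restrict_mono hAI le_rfl)
  have huL2B : MemLp u 2 (volume.restrict B) :=
    huL2.mono_measure (Measure.restrict_mono hBI le_rfl)
  have hu2A_nn : 0 ≤ ∫ y in A, u y ^ 2 := integral_nonneg fun y => sq_nonneg _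
  have hu2B_nn : 0 ≤ ∫ y in B, u y ^ 2 := integral_nonneg fun y => sq_nonneg _
  have hu2_le : (∫ y in I, u y ^ 2) ≤ 1 := by
    have he := huL2.eLpNorm_eq_integral_rpow_norm two_ne_zero ENNReal.ofNat_ne_top
    rw [he, ENNReal.ofReal_le_one] at heLp
    have hX : (∫ y in I, ‖u y‖ ^ ((2:ℝ≥0∞).toReal)) = ∫ y in I, u y ^ 2 := by
      refine integral_congr_ae (Filter.Eventually.of_forall fun y => ?_)
      simp only [hpow]; simp [Real.norm_eq_abs, sq_abs]
    rw [hX, ENNReal.toReal_ofNat] at heLp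
    have hnn : 0 ≤ ∫ y in I, u y ^ 2 := integral_nonneg fun y => sq_nonneg _
    have h2 := pow_le_one₀ (n := 2) (Real.rpow_nonneg hnn _) heLp
    calc (∫ y in I, u y ^ 2)
        = ((∫ y in I, u y ^ 2) ^ ((2:ℝ)⁻¹)) ^ (2:ℕ) := by
          rw [← Real.rpow_natCast (_ ^ _) 2, ← Real.rpow_mul hnn]; norm_num
      _ ≤ 1 := h2
  have husplit : (∫ y in A, u y ^ 2) + (∫ y in B, u y ^ 2) = ∫ y in I, u y ^ 2 := by
    rw [← hABI]
    exact (setIntegral_union hdisj hBm (hu2int.mono_set hAI) (hu2int.mono_set hBI)).symm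
  -- sections vanish
  have hdiagA : ∀ᵐ q ∂(volume.restrict (A ×ˢ A)), f q.1 q.2 = 0 :=
    ae_restrict_of_ae_restrict_of_subset Set.subset_union_left hdiag
  have hdiagB : ∀ᵐ q ∂(volume.restrict (B ×ˢ B)), f q.1 q.2 = 0 :=
    ae_restrict_of_ae_restrict_of_subset Set.subset_union_right hdiag
  have hsecA : ∀ᵐ x ∂(volume.restrict A), ∀ᵐ y ∂(volume.restrict A), f x y = 0 :=
    ae_section_zero' hfm hAm hdiagA
  have hsecB : ∀ᵐ x ∂(volume.restrict B), ∀ᵐ y ∂(volume.restrict B), f x y = 0 :=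
    ae_section_zero' hfm hBm hdiagB
  -- integrands integrable
  have hfuint : ∀ (x : ℝ) (s : Set ℝ), s ⊆ I → IntegrableOn (fun y => f x y * u y) s := by
    intro x s hsub
    refine ((huint.mono_set hsub).abs.mono' ((hfxm x).mul hu).aestronglyMeasurable ?_)
    refine Filter.Eventually.of_forall fun y => ?_
    rw [Real.norm_eq_abs, abs_mul]
    calc |f x y| * |u y| ≤ 1 * |u y| :=
          mul_le_mul_of_nonneg_right (hf1 x y) (abs_nonneg _)
      _ = |u y| := one_mul _
  have hfsqint : ∀ (x : ℝ) (s : Set ℝ), volume s ≠ ⊤ →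
      IntegrableOn (fun y => f x y ^ 2) s := by
    intro x s hs
    exact (hfxL2 x s hs).integrable_sq
  have hgsplit : ∀ x : ℝ, (∫ y in I, f x y * u y)
      = (∫ y in A, f x y * u y) + (∫ y in B, f x y * u y) := by
    intro x
    rw [← hABI]
    exact setIntegral_union hdisj hBm (hfuint x A hAI) (hfuint x B hBI)
  -- inner bound on A
  have hgA : ∀ᵐ x ∂(volume.restrict A), (∫ y in I, f x y * u y) ^ 2
      ≤ (∫ y in B, f x y ^ 2) * (∫ y in B, u y ^ 2) := by
    filter_upwards [hsecA] with x hx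
    have h0 : (∫ y in A, f x y * u y) = 0 :=
      integral_eq_zero_of_ae (hx.mono fun y hy => by simp [hy])
    rw [hgsplit x, h0, zero_add]
    exact sq_integral_mul_le' (hfxL2 x B hBfin) huL2B
  have hgB : ∀ᵐ x ∂(volume.restrict B), (∫ y in I, f x y * u y) ^ 2
      ≤ (∫ y in A, f x y ^ 2) * (∫ y in A, u y ^ 2) := by
    filter_upwards [hsecB] with x hx
    have h0 : (∫ y in B, f x y * u y) = 0 :=
      integral_eq_zero_of_ae (hx.mono fun y hy => by simp [hy])
    rw [hgsplit x, h0, add_zero]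
    exact sq_integral_mul_le' (hfxL2 x A hAfin) huL2A
  -- measurability of the integral functions
  have hgm : StronglyMeasurable fun x => ∫ y in I, f x y * u y :=
    StronglyMeasurable.integral_prod_right (ν := volume.restrict I)
      (f := fun x y => f x y * u y) (hfm.mul (hu.comp measurable_snd)).stronglyMeasurable
  have hFm : ∀ s : Set ℝ, StronglyMeasurable fun x => ∫ y in s, f x y ^ 2 := fun s =>
    StronglyMeasurable.integral_prod_right (ν := volume.restrict s)
      (f := fun x y => f x y ^ 2) (hfm.pow_const 2).stronglyMeasurable
  -- bounds
  have hvols : ∀ s : Set ℝ, s ⊆ I → (volume s).toReal ≤ 1 := by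
    intro s hs
    have h1 : volume s ≤ 1 := hvolI ▸ measure_mono hs
    simpa using ENNReal.toReal_mono ENNReal.one_ne_top h1
  have hFsq_nn : ∀ (x : ℝ) (s : Set ℝ), 0 ≤ ∫ y in s, f x y ^ 2 :=
    fun x s => integral_nonneg fun y => sq_nonneg _
  have hFsq_le : ∀ (x : ℝ) (s : Set ℝ), s ⊆ I → volume s ≠ ⊤ → (∫ y in s, f x y ^ 2) ≤ 1 := by
    intro x s hs hfin
    calc (∫ y in s, f x y ^ 2) ≤ ∫ y in s, (1:ℝ) := by
          refine integral_mono (hfsqint x s hfin) (integrableOn_const hfin)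
            fun y => ?_
          rw [← sq_abs]
          exact pow_le_one₀ (abs_nonneg _) (hf1 x y)
      _ = (volume s).toReal := by simp [Measure.real]
      _ ≤ 1 := hvols s hs
  have hFB_int : ∀ s t : Set ℝ, t ⊆ I → volume t ≠ ⊤ → volume s ≠ ⊤ →
      IntegrableOn (fun x => ∫ y in t, f x y ^ 2) s := by
    intro s t htI htfin hsfin
    refine Measure.integrableOn_of_bounded hsfin (hFm t).measurable.aestronglyMeasurable
      (M := 1) (Filter.Eventually.of_forall fun x => ?_)
    rw [Real.norm_eq_abs, abs_of_nonneg (hFsq_nn x t)]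
    exact hFsq_le x t htI htfin
  have hgb : ∀ x, |∫ y in I, f x y * u y| ≤ ∫ y in I, |u y| := by
    intro x
    calc |∫ y in I, f x y * u y| = ‖∫ y in I, f x y * u y‖ := (Real.norm_eq_abs _).symm
      _ ≤ ∫ y in I, ‖f x y * u y‖ := norm_integral_le_integral_norm _
      _ ≤ ∫ y in I, |u y| := by
          refine integral_mono (hfuint x I subset_rfl).norm huint.abs fun y => ?_
          rw [Real.norm_eq_abs, abs_mul]
          calc |f x y| * |u y| ≤ 1 * |u y| :=
                mul_le_mul_of_nonneg_right (hf1 x y) (abs_nonneg _)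
            _ = |u y| := one_mul _
  have hgsq_int : ∀ s : Set ℝ, volume s ≠ ⊤ →
      IntegrableOn (fun x => (∫ y in I, f x y * u y) ^ 2) s := by
    intro s hsfin
    refine Measure.integrableOn_of_bounded hsfin
      ((hgm.measurable.pow_const 2).aestronglyMeasurable)
      (M := (∫ y in I, |u y|) ^ 2) (Filter.Eventually.of_forall fun x => ?_)
    rw [Real.norm_eq_abs, abs_pow]
    exact pow_le_pow_left₀ (abs_nonneg _) (hgb x) 2
  -- comparison integrals over A and B
  have hAbound : (∫ x in A, (∫ y in I, f x y * u y) ^ 2)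
      ≤ (∫ x in A, ∫ y in B, f x y ^ 2) * (∫ y in B, u y ^ 2) := by
    have hint1 : IntegrableOn (fun x => (∫ y in B, f x y ^ 2) * (∫ y in B, u y ^ 2)) A :=
      (hFB_int A B hBI hBfin hAfin).mul_const _
    have hint0 : IntegrableOn (fun x => (∫ y in I, f x y * u y) ^ 2) A := hgsq_int A hAfin
    have h1 : (∫ x in A, (∫ y in I, f x y * u y) ^ 2)
        ≤ ∫ x in A, (∫ y in B, f x y ^ 2) * (∫ y in B, u y ^ 2) :=
      integral_mono_ae hint0 hint1 hgA
    rw [integral_mul_const] at h1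
    exact h1
  have hBbound : (∫ x in B, (∫ y in I, f x y * u y) ^ 2)
      ≤ (∫ x in B, ∫ y in A, f x y ^ 2) * (∫ y in A, u y ^ 2) := by
    have hint1 : IntegrableOn (fun x => (∫ y in A, f x y ^ 2) * (∫ y in A, u y ^ 2)) B :=
      (hFB_int B A hAI hAfin hBfin).mul_const _
    have hint0 : IntegrableOn (fun x => (∫ y in I, f x y * u y) ^ 2) B := hgsq_int B hBfin
    have h1 : (∫ x in B, (∫ y in I, f x y * u y) ^ 2)
        ≤ ∫ x in B, (∫ y in A, f x y ^ 2) * (∫ y in A, u y ^ 2) :=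
      integral_mono_ae hint0 hint1 hgB
    rw [integral_mul_const] at h1
    exact h1
  -- Fubini identifications
  have hprodint : ∀ s t : Set ℝ, volume s ≠ ⊤ → volume t ≠ ⊤ →
      IntegrableOn (fun q : ℝ × ℝ => f q.1 q.2 ^ 2) (s ×ˢ t)
        ((volume : Measure ℝ).prod volume) := by
    intro s t hs ht
    refine Measure.integrableOn_of_bounded ?_ ?_ (M := 1)
      (Filter.Eventually.of_forall fun q => ?_)
    · rw [Measure.prod_prod]
      exact ENNReal.mul_ne_top hs ht
    · exact ((hfm.comp (measurable_fst.prodMk measurable_snd)).pow_const 2).aestronglyMeasurable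
    · rw [Real.norm_eq_abs, abs_pow]
      exact pow_le_one₀ (abs_nonneg _) (hf1 q.1 q.2)
  have hTab : (∫ x in A, ∫ y in B, f x y ^ 2) = ∫ q in A ×ˢ B, (f q.1 q.2) ^ 2 := by
    rw [Measure.volume_eq_prod ℝ ℝ]
    exact (setIntegral_prod _ (hprodint A B hAfin hBfin)).symm
  have hTba : (∫ x in B, ∫ y in A, f x y ^ 2) = ∫ q in B ×ˢ A, (f q.1 q.2) ^ 2 := by
    rw [Measure.volume_eq_prod ℝ ℝ]
    exact (setIntegral_prod _ (hprodint B A hBfin hAfin)).symm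
  have hswap : (∫ q in B ×ˢ A, (f q.1 q.2) ^ 2) = ∫ q in A ×ˢ B, (f q.1 q.2) ^ 2 := by
    rw [Measure.volume_eq_prod ℝ ℝ]
    have h := (Measure.measurePreserving_swap (μ := (volume : Measure ℝ)) (ν := volume)).setIntegral_preimage_emb
      MeasurableEquiv.prodComm.measurableEmbedding (fun q : ℝ × ℝ => (f q.1 q.2) ^ 2) (B ×ˢ A)
    rw [Set.preimage_swap_prod] at h
    rw [← h]
    refine setIntegral_congr_fun (hAm.prod hBm) fun q hq => ?_
    simp only [Prod.fst_swap, Prod.snd_swap]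
    rw [hfsymm]
  -- decomposition of the full square integral
  have hinner_split : ∀ x : ℝ, (∫ y in I, f x y ^ 2)
      = (∫ y in A, f x y ^ 2) + (∫ y in B, f x y ^ 2) := fun x => by
    rw [← hABI]
    exact setIntegral_union hdisj hBm (hfsqint x A hAfin) (hfsqint x B hBfin)
  have hIA : (∫ x in A, ∫ y in I, f x y ^ 2) = ∫ x in A, ∫ y in B, f x y ^ 2 := by
    refine integral_congr_ae ?_
    filter_upwards [hsecA] with x hx
    rw [hinner_split x, integral_eq_zero_of_ae (hx.mono fun y hy => by simp [hy]), zero_add]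
  have hIB : (∫ x in B, ∫ y in I, f x y ^ 2) = ∫ x in B, ∫ y in A, f x y ^ 2 := by
    refine integral_congr_ae ?_
    filter_upwards [hsecB] with x hx
    rw [hinner_split x, integral_eq_zero_of_ae (hx.mono fun y hy => by simp [hy]), add_zero]
  have hS : (∫ q in unitSq, (f q.1 q.2) ^ 2)
      = (∫ q in A ×ˢ B, (f q.1 q.2) ^ 2) + (∫ q in B ×ˢ A, (f q.1 q.2) ^ 2) := by
    have hSfub : (∫ q in unitSq, (f q.1 q.2) ^ 2) = ∫ x in I, ∫ y in I, f x y ^ 2 := by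
      rw [show unitSq = I ×ˢ I from rfl, Measure.volume_eq_prod ℝ ℝ]
      exact setIntegral_prod _ (hprodint I I hIfin hIfin)
    have houter : (∫ x in I, ∫ y in I, f x y ^ 2)
        = (∫ x in A, ∫ y in I, f x y ^ 2) + (∫ x in B, ∫ y in I, f x y ^ 2) := by
      have h := setIntegral_union (f := fun x => ∫ y in I, f x y ^ 2) (μ := volume)
        hdisj hBm (hFB_int A I subset_rfl hIfin hAfin) (hFB_int B I subset_rfl hIfin hBfin)
      rwa [hABI] at h
    rw [hSfub, houter, hIA, hIB, hTab, hTba]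
  -- final combination
  have hTab_nn : 0 ≤ ∫ q in A ×ˢ B, (f q.1 q.2) ^ 2 := by
    rw [← hTab]
    exact integral_nonneg fun x => hFsq_nn x B
  have hgsplit2 : (∫ x in I, (∫ y in I, f x y * u y) ^ 2)
      = (∫ x in A, (∫ y in I, f x y * u y) ^ 2) + ∫ x in B, (∫ y in I, f x y * u y) ^ 2 := by
    have h := setIntegral_union (f := fun x => (∫ y in I, f x y * u y) ^ 2) (μ := volume)
      hdisj hBm (hgsq_int A hAfin) (hgsq_int B hBfin)
    rwa [hABI] at h
  have hαβ : (∫ y in A, u y ^ 2) + (∫ y in B, u y ^ 2) ≤ 1 := husplit ▸ hu2_le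
  have hkey := mul_le_mul_of_nonneg_left hαβ hTab_nn
  rw [hgsplit2, hS]
  rw [hTab] at hAbound
  rw [hTba, hswap] at hBbound
  nlinarith [hAbound, hBbound, hkey, hTab_nn, hu2A_nn, hu2B_nn]


end Stmt19Main

/-- norm inequalities for bipartite-type graphons:
`‖f‖₁ ≤ ‖f‖_op ≤ ‖f‖₂/√2`. -/
theorem stmt19 (γ p : ℝ) (hγ : 0 < γ) (hγ1 : γ < 1) (hp : 0 < p) (hp1 : p < 1)
    (f : ℝ → ℝ → ℝ) (hf : IsGraphon f)
    (hdiag : ∀ᵐ q ∂(volume.restrict (diagBlocks γ)), f q.1 q.2 = 0) :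
    (∫ q in unitSq, f q.1 q.2) ≤ opNorm f ∧
      opNorm f ≤ (1 / Real.sqrt 2) * (∫ q in unitSq, (f q.1 q.2) ^ 2) ^ ((2:ℝ)⁻¹) := by
  obtain ⟨hfm, hf01, hfsymm⟩ := hf
  set I : Set ℝ := Set.Icc (0:ℝ) 1 with hI
  set S : ℝ := ∫ q in unitSq, (f q.1 q.2) ^ 2 with hSdef
  set Sset : Set ℝ := {c : ℝ | ∃ u : ℝ → ℝ, Measurable u ∧
    eLpNorm u 2 (volume.restrict (Set.Icc (0:ℝ) 1)) ≤ 1 ∧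
    c = (∫ x in Set.Icc (0:ℝ) 1, (∫ y in Set.Icc (0:ℝ) 1, f x y * u y) ^ 2) ^ ((2:ℝ)⁻¹)}
    with hSset
  have hop : opNorm f = sSup Sset := rfl
  have hIfin : volume I ≠ ⊤ := by simp [hI]
  have hvolI : volume I = 1 := by rw [hI, Real.volume_Icc]; norm_num
  have hf1 : ∀ x y, |f x y| ≤ 1 := fun x y =>
    abs_le.mpr ⟨by linarith [(hf01 x y).1], (hf01 x y).2⟩
  have hSnn : 0 ≤ S := by
    rw [hSdef]; exact integral_nonneg fun q => sq_nonneg _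
  have hhalf : ((1:ℝ)/2) ^ ((2:ℝ)⁻¹) = 1 / Real.sqrt 2 := by
    rw [one_div, Real.inv_rpow (by norm_num : (0:ℝ) ≤ 2), Real.sqrt_eq_rpow, one_div]
    norm_num
  -- every element of the set is at most the upper bound
  have hub : ∀ c ∈ Sset, c ≤ (1 / Real.sqrt 2) * S ^ ((2:ℝ)⁻¹) := by
    rintro c ⟨u, hum, hue, rfl⟩
    have hkey := stmt19_key γ hγ hγ1 f ⟨hfm, hf01, hfsymm⟩ hdiag u hum hue
    have h1 : ((∫ x in Set.Icc (0:ℝ) 1, (∫ y in Set.Icc (0:ℝ) 1, f x y * u y) ^ 2) : ℝ) ^ ((2:ℝ)⁻¹)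
        ≤ ((1/2) * S) ^ ((2:ℝ)⁻¹) :=
      Real.rpow_le_rpow (integral_nonneg fun x => sq_nonneg _) hkey (by norm_num)
    calc _ ≤ ((1/2) * S) ^ ((2:ℝ)⁻¹) := h1
      _ = (1 / Real.sqrt 2) * S ^ ((2:ℝ)⁻¹) := by
          rw [Real.mul_rpow (by norm_num) hSnn, hhalf]
  have hbnn : 0 ≤ (1 / Real.sqrt 2) * S ^ ((2:ℝ)⁻¹) :=
    mul_nonneg (by positivity) (Real.rpow_nonneg hSnn _)
  have hbdd : BddAbove Sset := ⟨_, hub⟩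
  constructor
  · -- lower bound
    -- the constant function 1
    have hμne : (volume.restrict I : Measure ℝ) ≠ 0 := by
      intro h0
      have := congrArg (fun μ : Measure ℝ => μ Set.univ) h0
      simp only [Measure.restrict_apply_univ] at this
      rw [hvolI] at this
      simp at this
    have help1 : eLpNorm (fun _ : ℝ => (1:ℝ)) 2 (volume.restrict I) ≤ 1 := by
      rw [eLpNorm_const (1:ℝ) two_ne_zero hμne]
      simp [Measure.restrict_apply_univ, hvolI]
    have hmem : ((∫ x in I, (∫ y in I, f x y) ^ 2) ^ ((2:ℝ)⁻¹)) ∈ Sset := by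
      refine ⟨fun _ => 1, measurable_const, help1, ?_⟩
      simp [hI]
    -- Fubini for the plain integral
    have hfintprod : IntegrableOn (fun q : ℝ × ℝ => f q.1 q.2) (I ×ˢ I)
        ((volume : Measure ℝ).prod volume) := by
      refine Measure.integrableOn_of_bounded ?_ ?_ (M := 1)
        (Filter.Eventually.of_forall fun q => ?_)
      · rw [Measure.prod_prod]; exact ENNReal.mul_ne_top hIfin hIfin
      · exact (hfm.comp (measurable_fst.prodMk measurable_snd)).aestronglyMeasurable
      · rw [Real.norm_eq_abs]; exact hf1 q.1 q.2
    have hFub : (∫ q in unitSq, f q.1 q.2) = ∫ x in I, ∫ y in I, f x y := by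
      rw [show unitSq = I ×ˢ I from rfl, Measure.volume_eq_prod ℝ ℝ]
      exact setIntegral_prod _ hfintprod
    -- the row-integral function h
    have hhm : StronglyMeasurable fun x => ∫ y in I, f x y :=
      StronglyMeasurable.integral_prod_right (ν := volume.restrict I)
        (f := fun x y => f x y) hfm.stronglyMeasurable
    have hhb : ∀ x, |∫ y in I, f x y| ≤ 1 := by
      intro x
      have hfx : Measurable (f x) := hfm.of_uncurry_left
      have hfxint : IntegrableOn (f x) I := by
        refine Measure.integrableOn_of_bounded hIfin hfx.aestronglyMeasurable (M := 1)
          (Filter.Eventually.of_forall fun y => ?_)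
        rw [Real.norm_eq_abs]; exact hf1 x y
      calc |∫ y in I, f x y| = ‖∫ y in I, f x y‖ := (Real.norm_eq_abs _).symm
        _ ≤ ∫ y in I, ‖f x y‖ := norm_integral_le_integral_norm _
        _ ≤ ∫ y in I, (1:ℝ) := by
            refine integral_mono hfxint.norm (integrableOn_const hIfin)
              fun y => ?_
            rw [Real.norm_eq_abs]; exact hf1 x y
        _ = 1 := by simp [Measure.real, hvolI]
    have hhL2 : MemLp (fun x => ∫ y in I, f x y) 2 (volume.restrict I) :=
      memL2_of_bounded' hIfin hhm.measurable hhb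
    have honeL2 : MemLp (fun _ : ℝ => (1:ℝ)) 2 (volume.restrict I) :=
      memL2_of_bounded' hIfin measurable_const (fun _ => by norm_num)
    have hcs := sq_integral_mul_le' hhL2 honeL2
    simp only [mul_one, one_pow] at hcs
    have hone : (∫ _ in I, (1:ℝ)) = 1 := by simp [Measure.real, hvolI]
    rw [hone, mul_one] at hcs
    -- conclude
    have hchain : (∫ q in unitSq, f q.1 q.2) ≤ (∫ x in I, (∫ y in I, f x y) ^ 2) ^ ((2:ℝ)⁻¹) := by
      rw [hFub]
      calc (∫ x in I, ∫ y in I, f x y)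
          ≤ Real.sqrt ((∫ x in I, ∫ y in I, f x y) ^ 2) := by
            rw [Real.sqrt_sq_eq_abs]; exact le_abs_self _
        _ ≤ Real.sqrt (∫ x in I, (∫ y in I, f x y) ^ 2) := Real.sqrt_le_sqrt hcs
        _ = (∫ x in I, (∫ y in I, f x y) ^ 2) ^ ((2:ℝ)⁻¹) := by
            rw [Real.sqrt_eq_rpow, one_div]
    rw [hop]
    exact hchain.trans (le_csSup hbdd hmem)
  · -- upper bound
    rw [hop]
    exact Real.sSup_le hub hbnn


end GraphonLDP
end
end
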